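/- arXiv:2402.12169 — 6 statements merged into one kernel-verified Lean document; each statement's English description precedes it below -/
import Mathlib

section
/- Every finitely presented group admits a convenient presentation. Precisely: for every finite type α and every finite subset R of the free group on α, there exist a finite type β, a finite subset S of the free group on β, and a map ι : β → β such that (i) every element of S has the form (FreeGroup.of a) * (FreeGroup.of b) * (FreeGroup.of c)⁻¹ for some a, b, c : β, (ii) for every b : β the image of FreeGroup.of (ι b) in the presented group PresentedGroup S equals the inverse of the image of FreeGroup.of b, and (iii) PresentedGroup R and PresentedGroup S are isomorphic as groups. -/
/-!
Take as generators the words of length at most `N` over `α × Bool`, where `N ≥ 1` bounds the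
length of a word spelling each relator, and as relators every triangle `u * v * w⁻¹` for which
`uv = w` holds in `PresentedGroup R`. These triangles force each generator `w` to be the product
of the letters it spells, `[(a, false)]` to be the inverse of `[(a, true)]` and `[]` to be `1`,
while a relator `r` of `R` reappears as the triangle `r * [] * []⁻¹`. Hence `a ↦ [(a, true)]`
and `w ↦ w` are mutually inverse, and the inverse of a generator is its reversed inverted word.
-/

namespace ConvenientPresentation

abbrev BoundedWord (α : Type*) (N : ℕ) : Type _ := {w : List (α × Bool) // w.length ≤ N}

instance {α : Type*} [Finite α] (N : ℕ) : Finite (BoundedWord α N) :=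
  (List.finite_length_le (α × Bool) N).to_subtype

lemma exists_boundedWord_of_finite {α : Type*} {R : Set (FreeGroup α)} (hR : R.Finite) :
    ∃ N, 0 < N ∧ ∀ r ∈ R, ∃ w : BoundedWord α N, FreeGroup.mk w.1 = r := by
  classical
  obtain ⟨N, hN⟩ := (hR.image fun r => r.toWord.length).bddAbove
  exact ⟨N + 1, N.succ_pos, fun r hr =>
    ⟨⟨r.toWord, (hN ⟨r, hr, rfl⟩).trans N.le_succ⟩, FreeGroup.mk_toWord⟩⟩

variable {α : Type*} (R : Set (FreeGroup α)) (N : ℕ)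

def tableRelators : Set (FreeGroup (BoundedWord α N)) :=
  {s | ∃ u v w : BoundedWord α N,
    PresentedGroup.mk R (FreeGroup.mk (u.1 ++ v.1)) = PresentedGroup.mk R (FreeGroup.mk w.1) ∧
      s = FreeGroup.of u * FreeGroup.of v * (FreeGroup.of w)⁻¹}

lemma tableRelators_finite [Finite α] : (tableRelators R N).Finite :=
  (Set.finite_range fun t : BoundedWord α N × BoundedWord α N × BoundedWord α N =>
    FreeGroup.of t.1 * FreeGroup.of t.2.1 * (FreeGroup.of t.2.2)⁻¹).subset
    fun _ ⟨u, v, w, _, hs⟩ => ⟨(u, v, w), hs.symm⟩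

abbrev TableGroup : Type _ := PresentedGroup (tableRelators R N)

variable {N}

lemma of_mul_of_eq_of (u v w : BoundedWord α N)
    (h : PresentedGroup.mk R (FreeGroup.mk (u.1 ++ v.1)) = PresentedGroup.mk R (FreeGroup.mk w.1)) :
    (PresentedGroup.of u : TableGroup R N) * PresentedGroup.of v = PresentedGroup.of w := by
  simpa only [PresentedGroup.of, map_mul] using
    PresentedGroup.mk_eq_mk_of_mul_inv_mem (rels := tableRelators R N) ⟨u, v, w, h, rfl⟩

lemma of_nil_eq_one : (PresentedGroup.of ⟨[], N.zero_le⟩ : TableGroup R N) = 1 :=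
  mul_eq_left.mp (of_mul_of_eq_of R ⟨[], N.zero_le⟩ ⟨[], N.zero_le⟩ ⟨[], N.zero_le⟩ rfl)

def letterHom (hN : 0 < N) : FreeGroup α →* TableGroup R N :=
  FreeGroup.lift fun a => PresentedGroup.of ⟨[(a, true)], hN⟩

lemma of_singleton_eq_letterHom (hN : 0 < N) (x : α × Bool) :
    (PresentedGroup.of ⟨[x], hN⟩ : TableGroup R N) = letterHom R hN (FreeGroup.mk [x]) := by
  obtain ⟨a, _ | _⟩ := x
  · have hinv : FreeGroup.mk [(a, false)] = (FreeGroup.of a)⁻¹ := rfl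
    have hcancel : FreeGroup.mk ([(a, true)] ++ [(a, false)]) = FreeGroup.mk [] := by
      rw [← FreeGroup.mul_mk, hinv]
      exact mul_inv_cancel (FreeGroup.of a)
    have hprod := (of_mul_of_eq_of R ⟨_, hN⟩ ⟨_, hN⟩ ⟨[], N.zero_le⟩ (congrArg _ hcancel)).trans
      (of_nil_eq_one R)
    rw [hinv, map_inv, letterHom, FreeGroup.lift_apply_of]
    exact eq_inv_of_mul_eq_one_right hprod
  · exact (FreeGroup.lift_apply_of ..).symm

lemma of_eq_letterHom (hN : 0 < N) (w : BoundedWord α N) :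
    (PresentedGroup.of w : TableGroup R N) = letterHom R hN (FreeGroup.mk w.1) := by
  obtain ⟨w, hw⟩ := w
  induction w with
  | nil => exact of_nil_eq_one R
  | cons x w ih =>
    have hw' : w.length ≤ N := (Nat.le_succ _).trans hw
    rw [← of_mul_of_eq_of R ⟨[x], hN⟩ ⟨w, hw'⟩ _ rfl, ih hw', of_singleton_eq_letterHom,
      ← map_mul, FreeGroup.mul_mk]
    rfl

def toTable (hN : 0 < N) (hR : ∀ r ∈ R, ∃ w : BoundedWord α N, FreeGroup.mk w.1 = r) :
    PresentedGroup R →* TableGroup R N :=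
  PresentedGroup.toGroup (f := fun a => PresentedGroup.of ⟨[(a, true)], hN⟩) fun r hr => by
    obtain ⟨w, rfl⟩ := hR r hr
    have hw : PresentedGroup.mk R (FreeGroup.mk (w.1 ++ [])) =
        PresentedGroup.mk R (FreeGroup.mk []) := by
      rw [List.append_nil]
      exact PresentedGroup.one_of_mem hr
    have hw1 := of_mul_of_eq_of R w ⟨[], N.zero_le⟩ ⟨[], N.zero_le⟩ hw
    rwa [of_nil_eq_one, mul_one, of_eq_letterHom R hN] at hw1

def fromTable : TableGroup R N →* PresentedGroup R :=
  PresentedGroup.toGroup (f := fun w => PresentedGroup.mk R (FreeGroup.mk w.1)) <| by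
    rintro _ ⟨u, v, w, h, rfl⟩
    simp only [map_mul, map_inv, FreeGroup.lift_apply_of]
    rw [← map_mul, FreeGroup.mul_mk, h, mul_inv_cancel]

def tableEquiv (hN : 0 < N) (hR : ∀ r ∈ R, ∃ w : BoundedWord α N, FreeGroup.mk w.1 = r) :
    PresentedGroup R ≃* TableGroup R N :=
  MonoidHom.toMulEquiv (toTable R hN hR) (fromTable R)
    (PresentedGroup.ext fun _ => rfl)
    (PresentedGroup.ext fun w => by
      simp only [MonoidHom.comp_apply, fromTable, PresentedGroup.toGroup.of, MonoidHom.id_apply]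
      exact (of_eq_letterHom R hN w).symm)

def wordInv (w : BoundedWord α N) : BoundedWord α N :=
  ⟨FreeGroup.invRev w.1, FreeGroup.invRev_length.trans_le w.2⟩

lemma of_wordInv (hN : 0 < N) (w : BoundedWord α N) :
    (PresentedGroup.of (wordInv w) : TableGroup R N) = (PresentedGroup.of w)⁻¹ := by
  rw [of_eq_letterHom R hN, of_eq_letterHom R hN, wordInv, ← FreeGroup.inv_mk, map_inv]

end ConvenientPresentation

open ConvenientPresentation in
/-- Every finitely presented group admits a *convenient* presentation: one whose
generating set is closed under inverses (witnessed by `ι`) and all of whose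
relators have the form `a * b * c⁻¹` for single generators `a, b, c`. -/
theorem convenient_presentation_exists
    (α : Type) [Fintype α] (R : Set (FreeGroup α)) (hR : R.Finite) :
    ∃ (β : Type) (_ : Fintype β) (S : Set (FreeGroup β)) (_ : S.Finite) (ι : β → β),
      (∀ s ∈ S, ∃ a b c : β,
        s = FreeGroup.of a * FreeGroup.of b * (FreeGroup.of c)⁻¹) ∧
      (∀ b : β,
        (PresentedGroup.of (rels := S) (ι b) : PresentedGroup S)
          = (PresentedGroup.of (rels := S) b)⁻¹) ∧
      Nonempty (PresentedGroup R ≃* PresentedGroup S) := by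
  obtain ⟨N, hN, hRN⟩ := exists_boundedWord_of_finite hR
  refine ⟨BoundedWord α N, Fintype.ofFinite _, tableRelators R N, tableRelators_finite R N,
    wordInv, ?_, of_wordInv R hN, ⟨tableEquiv R hN hRN⟩⟩
  rintro _ ⟨u, v, w, -, rfl⟩
  exact ⟨u, v, w, rfl⟩
end

section
/- For a convenient presentation, equality of words in the presented group is generated by end-of-word rewriting. Precisely: let X be a finite type, inv : X → X an involution (inv (inv a) = a for all a), and R a set of triples in X × X × X. Let G be the presented group PresentedGroup S where S = { (FreeGroup.of a) * (FreeGroup.of b) * (FreeGroup.of c)⁻¹ | (a,b,c) ∈ R }, let ρ : X → G send a generator to its image, and assume ρ (inv a) = (ρ a)⁻¹ for every a : X. For a word w : List X let ev w denote the product in G of ρ applied to its entries. Let ~ be the smallest reflexive, symmetric, transitive relation on List X such that: (1) w ++ [a, b] ~ w ++ [c] for every w and every (a,b,c) ∈ R; (2) w ++ [a, inv a] ~ w for every w and a; (3) if v ~ w then v ++ [a] ~ w ++ [a] for every a. Then for all words v, w : List X one has v ~ w if and only if ev v = ev w. -/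
/-- The relators of a *convenient* presentation determined by a set `R` of
triples of generators: each triple `(a, b, c)` contributes the relator
`a * b * c⁻¹`. -/
def convRels {X : Type*} (R : Set (X × X × X)) : Set (FreeGroup X) :=
  { w | ∃ a b c : X, (a, b, c) ∈ R ∧
        w = FreeGroup.of a * FreeGroup.of b * (FreeGroup.of c)⁻¹ }

/-- The smallest reflexive, symmetric, transitive relation on words generated by
end-of-word rewriting: (1) `w ++ [a, b] ~ w ++ [c]` for `(a,b,c) ∈ R`;
(2) `w ++ [a, inv a] ~ w`; (3) `v ~ w → v ++ [a] ~ w ++ [a]`. -/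
inductive WordRel {X : Type*} (inv : X → X) (R : Set (X × X × X)) :
    List X → List X → Prop
  | rel (w : List X) {a b c : X} :
      (a, b, c) ∈ R → WordRel inv R (w ++ [a, b]) (w ++ [c])
  | cancel (w : List X) (a : X) : WordRel inv R (w ++ [a, inv a]) w
  | snoc {v w : List X} :
      WordRel inv R v w → ∀ a : X, WordRel inv R (v ++ [a]) (w ++ [a])
  | refl (w : List X) : WordRel inv R w w
  | symm {v w : List X} : WordRel inv R v w → WordRel inv R w v
  | trans {u v w : List X} :
      WordRel inv R u v → WordRel inv R v w → WordRel inv R u w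

/-!
Soundness holds because every generating move preserves the value in any monoid in which the
letters satisfy the moves. For completeness, `WordRel` is a two-sided congruence for
concatenation, so the words modulo `WordRel` form a monoid in which every letter is a unit.
The relators hold among these units, so the universal property of the presented group gives a
homomorphism sending the value of a word `w` to its class; equal values thus force equal classes.
-/

namespace WordRel

variable {X : Type*} {inv : X → X} {R : Set (X × X × X)}

theorem prod_map_eq {M : Type*} [Monoid M] {f : X → M} (hinv : ∀ a, f a * f (inv a) = 1)
    (hR : ∀ a b c, (a, b, c) ∈ R → f a * f b = f c) {v w : List X}
    (h : WordRel inv R v w) : (v.map f).prod = (w.map f).prod := by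
  induction h with
  | rel w habc => simp [← hR _ _ _ habc]
  | cancel w a => simp [hinv]
  | snoc _ a ih => simp [ih]
  | refl => rfl
  | symm _ ih => exact ih.symm
  | trans _ _ ih₁ ih₂ => exact ih₁.trans ih₂

theorem append_left (u : List X) {v w : List X} (h : WordRel inv R v w) :
    WordRel inv R (u ++ v) (u ++ w) := by
  induction h with
  | rel w habc => simpa using rel (u ++ w) habc
  | cancel w a => simpa using cancel (u ++ w) a
  | snoc _ a ih => simpa using ih.snoc a
  | refl => exact refl _
  | symm _ ih => exact ih.symm
  | trans _ _ ih₁ ih₂ => exact ih₁.trans ih₂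

theorem append_right {v w : List X} (h : WordRel inv R v w) (u : List X) :
    WordRel inv R (v ++ u) (w ++ u) := by
  induction u using List.reverseRecOn with
  | nil => simpa using h
  | append_singleton u a ih => simpa using ih.snoc a

theorem append {v v' w w' : List X} (hv : WordRel inv R v v') (hw : WordRel inv R w w') :
    WordRel inv R (v ++ w) (v' ++ w') :=
  (hv.append_right w).trans (hw.append_left v')

variable (inv R) in
def setoid : Setoid (List X) :=
  ⟨WordRel inv R, ⟨refl, symm, trans⟩⟩

end WordRel

def WordMonoid {X : Type*} (inv : X → X) (R : Set (X × X × X)) : Type _ :=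
  Quotient (WordRel.setoid inv R)

namespace WordMonoid

variable {X : Type*} {inv : X → X} {R : Set (X × X × X)}

def mk (w : List X) : WordMonoid inv R :=
  Quotient.mk _ w

instance : Monoid (WordMonoid inv R) where
  mul := Quotient.map₂ (· ++ ·) fun _ _ hv _ _ hw => hv.append hw
  one := mk []
  mul_assoc := by
    rintro ⟨u⟩ ⟨v⟩ ⟨w⟩
    exact congrArg mk (List.append_assoc u v w)
  one_mul := by
    rintro ⟨w⟩
    rfl
  mul_one := by
    rintro ⟨w⟩
    exact congrArg mk (List.append_nil w)

theorem mk_eq_mk_iff {v w : List X} : (mk v : WordMonoid inv R) = mk w ↔ WordRel inv R v w :=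
  Quotient.eq

theorem mk_eq_prod_map (w : List X) :
    (mk w : WordMonoid inv R) = (w.map fun a => mk [a]).prod := by
  induction w with
  | nil => rfl
  | cons a w ih => rw [List.map_cons, List.prod_cons, ← ih]; rfl

theorem mk_mul_mk_inv (a : X) : (mk [a] * mk [inv a] : WordMonoid inv R) = 1 :=
  Quotient.sound (WordRel.cancel [] a)

/-- A right inverse of a right inverse is the element itself. -/
theorem mk_inv_mul_mk (a : X) : (mk [inv a] * mk [a] : WordMonoid inv R) = 1 := by
  rw [left_inv_eq_right_inv (mk_mul_mk_inv a) (mk_mul_mk_inv (inv a))]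
  exact mk_mul_mk_inv (inv a)

def unitOf (a : X) : (WordMonoid inv R)ˣ :=
  ⟨mk [a], mk [inv a], mk_mul_mk_inv a, mk_inv_mul_mk a⟩

theorem unitOf_mul_unitOf {a b c : X} (habc : (a, b, c) ∈ R) :
    (unitOf a * unitOf b : (WordMonoid inv R)ˣ) = unitOf c :=
  Units.ext (Quotient.sound (WordRel.rel [] habc))

theorem lift_unitOf_eq_one :
    ∀ r ∈ convRels R, FreeGroup.lift (unitOf (inv := inv) (R := R)) r = 1 := by
  rintro r ⟨a, b, c, habc, rfl⟩
  simpa [mul_inv_eq_one] using unitOf_mul_unitOf habc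

variable (inv) in
def ofPresentedGroup : PresentedGroup (convRels R) →* WordMonoid inv R :=
  (Units.coeHom _).comp (PresentedGroup.toGroup lift_unitOf_eq_one)

theorem ofPresentedGroup_prod_map_of (w : List X) :
    ofPresentedGroup inv ((w.map PresentedGroup.of).prod : PresentedGroup (convRels R)) =
      mk w := by
  rw [mk_eq_prod_map, ofPresentedGroup, map_list_prod, List.map_map]
  rfl

end WordMonoid

theorem PresentedGroup.of_mul_of_eq_of {X : Type*} {R : Set (X × X × X)} {a b c : X}
    (habc : (a, b, c) ∈ R) : (of a * of b : PresentedGroup (convRels R)) = of c := by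
  rw [← mul_inv_eq_one]
  exact PresentedGroup.one_of_mem ⟨a, b, c, habc, rfl⟩

theorem wordRel_iff_eval_eq_general
    {X : Type} (inv : X → X)
    (R : Set (X × X × X))
    (hρ : ∀ a : X,
      (PresentedGroup.of (rels := convRels R) (inv a) : PresentedGroup (convRels R))
        = (PresentedGroup.of (rels := convRels R) a)⁻¹)
    (v w : List X) :
    WordRel inv R v w ↔
      ((v.map fun a => (PresentedGroup.of (rels := convRels R) a :
          PresentedGroup (convRels R))).prod
        = (w.map fun a => (PresentedGroup.of (rels := convRels R) a :
          PresentedGroup (convRels R))).prod) := by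
  refine ⟨WordRel.prod_map_eq (by simp [hρ]) fun _ _ _ => PresentedGroup.of_mul_of_eq_of,
    fun h => ?_⟩
  rw [← WordMonoid.mk_eq_mk_iff (inv := inv), ← WordMonoid.ofPresentedGroup_prod_map_of,
    ← WordMonoid.ofPresentedGroup_prod_map_of]
  exact congrArg _ h

/-- For a convenient presentation, two words are related by end-of-word
rewriting iff they evaluate to equal elements of the presented group. -/
theorem wordRel_iff_eval_eq
    {X : Type} [Fintype X] (inv : X → X) (hinv : ∀ a : X, inv (inv a) = a)
    (R : Set (X × X × X))
    (hρ : ∀ a : X,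
      (PresentedGroup.of (rels := convRels R) (inv a) : PresentedGroup (convRels R))
        = (PresentedGroup.of (rels := convRels R) a)⁻¹)
    (v w : List X) :
    WordRel inv R v w ↔
      ((v.map fun a => (PresentedGroup.of (rels := convRels R) a :
          PresentedGroup (convRels R))).prod
        = (w.map fun a => (PresentedGroup.of (rels := convRels R) a :
          PresentedGroup (convRels R))).prod) :=
  wordRel_iff_eval_eq_general inv R hρ v w
end

section
/- The bounded distributive lattice of monotone Boolean functions is free on the coordinate evaluations: let n : ℕ and let M_n be the lattice of monotone functions (Fin n → Bool) →o Bool, with the pointwise order (which is a distributive lattice with a bottom and a top element). Let e : Fin n → M_n send i to the evaluation map x ↦ x i. Then for every distributive lattice L that is a bounded order and every function g : Fin n → L, there exists a unique bounded lattice homomorphism h : M_n → L (preserving ⊓, ⊔, ⊥, ⊤) such that h (e i) = g i for all i : Fin n. -/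
/-!
Every monotone Boolean function is the join of the minterms `⨅_{x i} eval i` of the points `x`
where it is `true` (a minterm is `true` exactly above its point). So a bounded lattice hom out
of `M_n` is determined by the images of the generators, which gives uniqueness, while the same
disjunctive normal form with the `eval i` replaced by `g i` defines the extension. Compatibility
of this extension with `⊓` is where distributivity of `L` enters: the meet of two joins of
minterms is the join of the pairwise meets, and the meet of the minterms of `x` and `y` is the
minterm of `x ⊔ y`.
-/

namespace Stmt4

/-- The lattice `M_n` of monotone Boolean functions on the `n`-cube. -/
abbrev MBF (n : ℕ) := (Fin n → Bool) →o Bool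

/-- The `i`-th coordinate evaluation, as a monotone Boolean function. -/
def eval {n : ℕ} (i : Fin n) : MBF n :=
  ⟨fun x => x i, fun _ _ h => h i⟩

noncomputable instance (n : ℕ) : BoundedOrder (MBF n) :=
  { (inferInstance : OrderTop (MBF n)), (inferInstance : OrderBot (MBF n)) with }

open Finset

lemma _root_.Finset.sup_eq_true_iff {α : Type*} {s : Finset α} {p : α → Bool} :
    s.sup p = true ↔ ∃ a ∈ s, p a = true :=
  Finset.lt_sup_iff (a := false)

lemma _root_.Finset.inf_eq_true_iff {α : Type*} {s : Finset α} {p : α → Bool} :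
    s.inf p = true ↔ ∀ a ∈ s, p a = true :=
  Finset.inf_eq_top_iff p s

lemma _root_.OrderHom.eq_true_of_le {α : Type*} [Preorder α] (f : α →o Bool) {x y : α}
    (hxy : x ≤ y) (hx : f x = true) : f y = true :=
  Bool.eq_true_of_true_le (hx ▸ f.monotone hxy)

section Minterm

variable {ι L M : Type*} [Fintype ι] [SemilatticeInf L] [OrderTop L]

def minterm (g : ι → L) (x : ι → Bool) : L :=
  (univ.filter fun i => x i).inf g

lemma minterm_sup [DecidableEq ι] (g : ι → L) (x y : ι → Bool) :
    minterm g (x ⊔ y) = minterm g x ⊓ minterm g y := by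
  simp only [minterm, Pi.sup_apply, Bool.max_eq_or, Bool.or_eq_true, filter_or, inf_union]

lemma minterm_le (g : ι → L) {x : ι → Bool} {i : ι} (hi : x i = true) : minterm g x ≤ g i :=
  inf_le (mem_filter.2 ⟨mem_univ i, hi⟩)

lemma minterm_single [DecidableEq ι] (g : ι → L) (i : ι) :
    minterm g (Pi.single i true) = g i := by
  have : (univ.filter fun j => Pi.single (M := fun _ => Bool) i true j) = {i} := by
    ext j
    by_cases hj : j = i <;> simp [hj]
  rw [minterm, this, inf_singleton]

lemma apply_minterm [SemilatticeInf M] [OrderTop M] (φ : L → M)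
    (map_inf : ∀ a b, φ (a ⊓ b) = φ a ⊓ φ b) (map_top : φ ⊤ = ⊤) (g : ι → L) (x : ι → Bool) :
    φ (minterm g x) = minterm (φ ∘ g) x :=
  apply_inf_eq_inf_comp φ map_inf map_top

lemma minterm_eq_true_iff {x y : ι → Bool} : minterm y x = true ↔ x ≤ y := by
  simp only [minterm, inf_eq_true_iff, mem_filter, mem_univ, true_and]
  exact Iff.rfl

end Minterm

section DNF

variable {ι L M : Type*} [Fintype ι] [DecidableEq ι] [Lattice L] [BoundedOrder L]

def dnf (g : ι → L) (f : (ι → Bool) →o Bool) : L :=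
  (univ.filter fun x => f x).sup (minterm g)

lemma dnf_sup (g : ι → L) (f f' : (ι → Bool) →o Bool) :
    dnf g (f ⊔ f') = dnf g f ⊔ dnf g f' := by
  simp only [dnf, OrderHom.coe_sup, Pi.sup_apply, Bool.max_eq_or, Bool.or_eq_true, filter_or,
    sup_union]

lemma dnf_inf {D : Type*} [DistribLattice D] [BoundedOrder D] (g : ι → D)
    (f f' : (ι → Bool) →o Bool) : dnf g (f ⊓ f') = dnf g f ⊓ dnf g f' := by
  apply le_antisymm
  · refine Finset.sup_le fun x hx => ?_
    simp only [mem_filter, mem_univ, true_and, OrderHom.coe_inf, Pi.inf_apply, Bool.min_eq_and,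
      Bool.and_eq_true] at hx
    exact le_inf (le_sup (by simpa using hx.1)) (le_sup (by simpa using hx.2))
  · rw [dnf, dnf, sup_inf_sup]
    refine Finset.sup_le fun p hp => ?_
    simp only [mem_product, mem_filter, mem_univ, true_and] at hp
    rw [← minterm_sup]
    refine le_sup (mem_filter.2 ⟨mem_univ _, ?_⟩)
    simp only [OrderHom.coe_inf, Pi.inf_apply, Bool.min_eq_and, Bool.and_eq_true]
    exact ⟨f.eq_true_of_le le_sup_left hp.1, f'.eq_true_of_le le_sup_right hp.2⟩

lemma dnf_bot (g : ι → L) : dnf g ⊥ = ⊥ := by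
  simp [dnf]

lemma dnf_top (g : ι → L) : dnf g ⊤ = ⊤ := by
  refine top_le_iff.1 ?_
  calc (⊤ : L) = minterm g ⊥ := by simp [minterm]
    _ ≤ dnf g ⊤ := le_sup (by simp)

lemma dnf_evalOrderHom (g : ι → L) (i : ι) : dnf g (Pi.evalOrderHom i) = g i := by
  refine le_antisymm (Finset.sup_le fun x hx => minterm_le g (mem_filter.1 hx).2) ?_
  calc g i = minterm g (Pi.single i true) := (minterm_single g i).symm
    _ ≤ dnf g (Pi.evalOrderHom i) := le_sup (by simp)

lemma apply_dnf [Lattice M] [BoundedOrder M] (φ : L → M)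
    (map_sup : ∀ a b, φ (a ⊔ b) = φ a ⊔ φ b) (map_inf : ∀ a b, φ (a ⊓ b) = φ a ⊓ φ b)
    (map_bot : φ ⊥ = ⊥) (map_top : φ ⊤ = ⊤) (g : ι → L) (f : (ι → Bool) →o Bool) :
    φ (dnf g f) = dnf (φ ∘ g) f := by
  rw [dnf, apply_sup_eq_sup_comp φ map_sup map_bot, dnf]
  exact sup_congr rfl fun x _ => apply_minterm φ map_inf map_top g x

lemma dnf_bool (y : ι → Bool) (f : (ι → Bool) →o Bool) : dnf y f = f y := by
  rw [Bool.eq_iff_iff, dnf, sup_eq_true_iff]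
  simp only [mem_filter, mem_univ, true_and, minterm_eq_true_iff]
  exact ⟨fun ⟨x, hx, hxy⟩ => f.eq_true_of_le hxy hx, fun hy => ⟨y, hy, le_rfl⟩⟩

lemma dnf_evalOrderHom_self (f : (ι → Bool) →o Bool) : dnf Pi.evalOrderHom f = f := by
  ext y
  calc (dnf Pi.evalOrderHom f) y = dnf y f :=
        apply_dnf (fun φ : (ι → Bool) →o Bool => φ y) (fun _ _ => rfl) (fun _ _ => rfl) rfl rfl _ f
    _ = f y := dnf_bool y f

end DNF

noncomputable def dnfHom {n : ℕ} {L : Type*} [DistribLattice L] [BoundedOrder L]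
    (g : Fin n → L) : BoundedLatticeHom (MBF n) L where
  toFun := dnf g
  map_sup' := dnf_sup g
  map_inf' := dnf_inf g
  map_top' := dnf_top g
  map_bot' := dnf_bot g

/-- The bounded distributive lattice of monotone Boolean functions in `n`
variables is free on the coordinate evaluations: every assignment of the
generators to a bounded distributive lattice `L` extends to a unique bounded
lattice homomorphism. -/
theorem monotone_boolean_functions_free
    (n : ℕ) (L : Type*) [DistribLattice L] [BoundedOrder L] (g : Fin n → L) :
    ∃! h : BoundedLatticeHom (MBF n) L, ∀ i : Fin n, h (eval i) = g i := by
  refine ⟨dnfHom g, dnf_evalOrderHom g, fun h hh => ?_⟩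
  ext f
  calc h f = h (dnf Pi.evalOrderHom f) := by rw [dnf_evalOrderHom_self]
    _ = dnf (h ∘ Pi.evalOrderHom) f :=
        apply_dnf h (map_sup h) (map_inf h) (map_bot h) (map_top h) _ f
    _ = dnf g f := congrArg (dnf · f) (funext hh)

end Stmt4
end

section
/- The De Morgan algebra of monotone Boolean functions in doubled variables is free: let n : ℕ and let M be the lattice of monotone functions f : ((Fin n → Bool) × (Fin n → Bool)) →o Bool with the pointwise order. Define ∼ : M → M by (∼f)(x, y) := !(f (fun i => !(y i), fun i => !(x i))). Then (a) ∼f is again monotone, and ∼ is an involutive antitone map on M (so M is a De Morgan algebra); and (b) M is free on the n generators e i := (fun (x,y) => x i), whose involutes are ∼(e i) = (fun (x,y) => y i): for every distributive lattice L that is a bounded order, every antitone involution ν : L → L (ν ∘ ν = id), and every g : Fin n → L, there exists a unique bounded lattice homomorphism h : M → L satisfying h (∼f) = ν (h f) for all f ∈ M and h (e i) = g i for all i : Fin n. -/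
namespace Stmt5

/-- The doubled Boolean `n`-cube `2^n × 2^n` (variables and their formal
negations), with the product/pointwise order. -/
abbrev DCube (n : ℕ) := (Fin n → Bool) × (Fin n → Bool)

/-- The lattice `M` of monotone Boolean functions on the doubled `n`-cube. -/
abbrev DM (n : ℕ) := DCube n →o Bool

/-- The De Morgan involution on monotone functions in doubled variables:
`(∼f)(x, y) = !(f (!y, !x))`. -/
def dmNeg {n : ℕ} (f : DM n) : DM n where
  toFun p := !(f (fun i => !(p.2 i), fun i => !(p.1 i)))
  monotone' := by
    have hnot : ∀ a b : Bool, a ≤ b → (!b) ≤ (!a) := by decide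
    intro p q hpq
    exact hnot _ _ (f.monotone
      ⟨fun i => hnot _ _ (hpq.2 i), fun i => hnot _ _ (hpq.1 i)⟩)

/-- The generator `e i = (x, y) ↦ x i`. -/
def eGen {n : ℕ} (i : Fin n) : DM n :=
  ⟨fun p => p.1 i, fun _ _ h => h.1 i⟩

/-- The involute of the generator `e i`, namely `(x, y) ↦ y i`. -/
def eGen' {n : ℕ} (i : Fin n) : DM n :=
  ⟨fun p => p.2 i, fun _ _ h => h.2 i⟩

noncomputable instance (n : ℕ) : BoundedOrder (DM n) :=
  { (inferInstance : OrderTop (DM n)), (inferInstance : OrderBot (DM n)) with }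

end Stmt5

/-!
Every monotone Boolean function is the join of the monomials (meets of the literals `x i`, `y i`)
of its true points, so a bounded lattice homomorphism out of `M` is determined by its values on
the `2n` literals `e i`, `∼(e i)`. Conversely, evaluating this disjunctive normal form in a bounded
distributive lattice `L` is a bounded lattice homomorphism for any values of the literals: joins
correspond to unions of supports, and meets to joins of pairs of true points, by distributivity
and monotonicity. Compatibility with the involutions then comes for free: `h ∘ ∼` and `ν ∘ h` are
both bounded lattice homomorphisms `M → Lᵒᵈ`, and they agree on the literals.
-/

def OrderIso.dualOfAntitoneInvolutive {α : Type*} [Preorder α] (ν : α → α) (hν : Antitone ν)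
    (hinv : Function.Involutive ν) : α ≃o αᵒᵈ where
  toFun a := OrderDual.toDual (ν a)
  invFun a := ν (OrderDual.ofDual a)
  left_inv := hinv
  right_inv := hinv
  map_rel_iff' {a b} := ⟨fun h => hinv a ▸ hinv b ▸ hν h, fun h => hν h⟩

lemma OrderHom.finset_sup_apply {α β ι : Type*} [Preorder α] [SemilatticeSup β] [OrderBot β]
    (s : Finset ι) (F : ι → α →o β) (a : α) : s.sup F a = s.sup (F · a) :=
  Finset.apply_sup_eq_sup_comp (fun G : α →o β => G a) (fun _ _ => rfl) rfl

lemma OrderHom.finset_inf_apply {α β ι : Type*} [Preorder α] [SemilatticeInf β] [OrderTop β]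
    (s : Finset ι) (F : ι → α →o β) (a : α) : s.inf F a = s.inf (F · a) :=
  Finset.apply_inf_eq_inf_comp (fun G : α →o β => G a) (fun _ _ => rfl) rfl

lemma Bool.finset_sup_eq_true {ι : Type*} {s : Finset ι} {f : ι → Bool} :
    s.sup f = true ↔ ∃ i ∈ s, f i = true := by
  induction s using Finset.cons_induction <;> simp_all

lemma Bool.finset_inf_eq_true {ι : Type*} {s : Finset ι} {f : ι → Bool} :
    s.inf f = true ↔ ∀ i ∈ s, f i = true :=
  Finset.inf_eq_top_iff f s

namespace Stmt5

variable {n : ℕ}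

lemma dmNeg_apply (f : DM n) (p : DCube n) :
    dmNeg f p = !(f (fun i => !(p.2 i), fun i => !(p.1 i))) := rfl

lemma dmNeg_dmNeg (f : DM n) : dmNeg (dmNeg f) = f := by
  ext p
  simp [dmNeg_apply]

lemma dmNeg_antitone : Antitone (dmNeg (n := n)) := fun _ _ hfg _ =>
  compl_le_compl (hfg _)

def dmNegIso : DM n ≃o (DM n)ᵒᵈ :=
  OrderIso.dualOfAntitoneInvolutive dmNeg dmNeg_antitone dmNeg_dmNeg

lemma dmNeg_eGen (i : Fin n) : dmNeg (eGen i) = eGen' i := by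
  ext p
  exact Bool.not_not (p.2 i)

lemma dmNeg_eGen' (i : Fin n) : dmNeg (eGen' i) = eGen i := by
  rw [← dmNeg_eGen, dmNeg_dmNeg]

def lits (p : DCube n) : Fin n ⊕ Fin n → Bool := Sum.elim p.1 p.2

lemma le_iff_lits_le {p q : DCube n} : p ≤ q ↔ lits p ≤ lits q := by
  simp [lits, Prod.le_def, Pi.le_def, Sum.forall]

def litSet (p : DCube n) : Finset (Fin n ⊕ Fin n) := {ℓ | lits p ℓ = true}

lemma mem_litSet {p : DCube n} {ℓ : Fin n ⊕ Fin n} : ℓ ∈ litSet p ↔ lits p ℓ = true := by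
  simp [litSet]

lemma litSet_sup (p q : DCube n) : litSet (p ⊔ q) = litSet p ∪ litSet q := by
  ext (i | i) <;> simp [mem_litSet, lits]

lemma litSet_bot : litSet (⊥ : DCube n) = ∅ := by
  ext (i | i) <;> simp [mem_litSet, lits]

def litPoint (ℓ : Fin n ⊕ Fin n) : DCube n :=
  (fun i => decide (Sum.inl i = ℓ), fun i => decide (Sum.inr i = ℓ))

lemma litSet_litPoint (ℓ : Fin n ⊕ Fin n) : litSet (litPoint ℓ) = {ℓ} := by
  ext (i | i) <;> simp [mem_litSet, lits, litPoint, eq_comm]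

def litDM : Fin n ⊕ Fin n → DM n := Sum.elim eGen eGen'

lemma litDM_apply (ℓ : Fin n ⊕ Fin n) (p : DCube n) : litDM ℓ p = lits p ℓ := by
  cases ℓ <;> rfl

lemma dmNeg_litDM (ℓ : Fin n ⊕ Fin n) : dmNeg (litDM ℓ) = litDM ℓ.swap := by
  cases ℓ
  · exact dmNeg_eGen _
  · exact dmNeg_eGen' _

noncomputable def monomial (p : DCube n) : DM n := (litSet p).inf litDM

lemma monomial_apply_eq_true {p q : DCube n} : monomial p q = true ↔ p ≤ q := by
  simp only [monomial, OrderHom.finset_inf_apply, Bool.finset_inf_eq_true, mem_litSet,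
    litDM_apply, le_iff_lits_le, Pi.le_def, Bool.le_iff_imp]

def support (f : DM n) : Finset (DCube n) := {p | f p = true}

lemma mem_support {f : DM n} {p : DCube n} : p ∈ support f ↔ f p = true := by
  simp [support]

lemma support_mono {f f' : DM n} (h : f ≤ f') : support f ⊆ support f' := fun p hp =>
  mem_support.2 (Bool.le_iff_imp.1 (h p) (mem_support.1 hp))

lemma support_sup (f f' : DM n) : support (f ⊔ f') = support f ∪ support f' := by
  ext p
  simp [mem_support]

lemma support_bot : support (⊥ : DM n) = ∅ := by
  ext p
  simp [mem_support]

lemma sup_mem_support_inf {f f' : DM n} {p q : DCube n} (hp : p ∈ support f)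
    (hq : q ∈ support f') : p ⊔ q ∈ support (f ⊓ f') := by
  refine mem_support.2 (Bool.and_eq_true_iff.2 ?_)
  exact ⟨Bool.le_iff_imp.1 (f.monotone le_sup_left) (mem_support.1 hp),
    Bool.le_iff_imp.1 (f'.monotone le_sup_right) (mem_support.1 hq)⟩

lemma eq_sup_monomial (f : DM n) : f = (support f).sup monomial := by
  ext q
  rw [OrderHom.finset_sup_apply, Bool.eq_iff_iff, Bool.finset_sup_eq_true]
  simp only [mem_support, monomial_apply_eq_true]
  refine ⟨fun hq => ⟨q, hq, le_rfl⟩, ?_⟩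
  rintro ⟨p, hp, hpq⟩
  simpa [hp, Bool.le_iff_imp] using f.monotone hpq

lemma boundedLatticeHom_ext {K : Type*} [Lattice K] [BoundedOrder K]
    {φ ψ : BoundedLatticeHom (DM n) K} (h : ∀ ℓ, φ (litDM ℓ) = ψ (litDM ℓ)) : φ = ψ := by
  ext f
  rw [eq_sup_monomial f, map_finset_sup, map_finset_sup]
  refine Finset.sup_congr rfl fun p _ => ?_
  simp only [Function.comp_apply, monomial, map_finset_inf]
  exact Finset.inf_congr rfl fun ℓ _ => h ℓ

lemma map_dmNeg_of_map_litDM_swap {L : Type*} [Lattice L] [BoundedOrder L] {ν : L → L}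
    (hν : Antitone ν) (hinv : Function.Involutive ν) (φ : BoundedLatticeHom (DM n) L)
    (h : ∀ ℓ, φ (litDM ℓ.swap) = ν (φ (litDM ℓ))) (f : DM n) : φ (dmNeg f) = ν (φ f) := by
  have key :
      (BoundedLatticeHom.dual φ).comp (dmNegIso (n := n) : BoundedLatticeHom (DM n) (DM n)ᵒᵈ) =
        (OrderIso.dualOfAntitoneInvolutive ν hν hinv : BoundedLatticeHom L Lᵒᵈ).comp φ :=
    boundedLatticeHom_ext fun ℓ => by
      show φ (dmNeg (litDM ℓ)) = ν (φ (litDM ℓ))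
      rw [dmNeg_litDM, h]
  exact congrArg OrderDual.ofDual (DFunLike.congr_fun key f)

section Lift

variable {L : Type*} [DistribLattice L] [BoundedOrder L] (a : Fin n ⊕ Fin n → L)

noncomputable def evalMonomial (p : DCube n) : L := (litSet p).inf a

lemma evalMonomial_sup (p q : DCube n) :
    evalMonomial a (p ⊔ q) = evalMonomial a p ⊓ evalMonomial a q := by
  rw [evalMonomial, litSet_sup, Finset.inf_union]; rfl

lemma evalMonomial_bot : evalMonomial a (⊥ : DCube n) = ⊤ := by
  rw [evalMonomial, litSet_bot, Finset.inf_empty]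

noncomputable def lift : BoundedLatticeHom (DM n) L where
  toFun f := (support f).sup (evalMonomial a)
  map_sup' f f' := by rw [support_sup, Finset.sup_union]
  map_inf' f f' := by
    refine le_antisymm (le_inf (Finset.sup_mono (support_mono inf_le_left))
      (Finset.sup_mono (support_mono inf_le_right))) ?_
    rw [Finset.sup_inf_sup]
    refine Finset.sup_le fun pq hpq => ?_
    rw [Finset.mem_product] at hpq
    rw [← evalMonomial_sup]
    exact Finset.le_sup (sup_mem_support_inf hpq.1 hpq.2)
  map_top' := top_unique <| evalMonomial_bot a ▸ Finset.le_sup (mem_support.2 rfl)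
  map_bot' := by rw [support_bot, Finset.sup_empty]

lemma lift_litDM (ℓ : Fin n ⊕ Fin n) : lift a (litDM ℓ) = a ℓ := by
  refine le_antisymm (Finset.sup_le fun p hp => Finset.inf_le ?_) ?_
  · rw [mem_litSet, ← litDM_apply]
    exact mem_support.1 hp
  · have hℓ : litPoint ℓ ∈ support (litDM ℓ) := by
      rw [mem_support, litDM_apply, ← mem_litSet, litSet_litPoint]
      exact Finset.mem_singleton_self ℓ
    calc a ℓ = evalMonomial a (litPoint ℓ) := by
          rw [evalMonomial, litSet_litPoint, Finset.inf_singleton]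
      _ ≤ lift a (litDM ℓ) := Finset.le_sup hℓ

end Lift

/-- The De Morgan algebra of monotone Boolean functions in doubled variables is
free on `n` generators: `∼` is a well-defined involutive antitone map on `M`,
`∼(e i) = (x, y) ↦ y i`, and every assignment of the generators to a bounded
distributive lattice `L` with antitone involution `ν` extends to a unique
bounded lattice homomorphism commuting with the involutions. -/
theorem deMorgan_monotone_functions_free (n : ℕ) :
    (∀ f : DM n, Monotone
      (fun p : DCube n => !(f (fun i => !(p.2 i), fun i => !(p.1 i))))) ∧
    (∀ f : DM n, dmNeg (dmNeg f) = f) ∧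
    (∀ f g : DM n, f ≤ g → dmNeg g ≤ dmNeg f) ∧
    (∀ i : Fin n, dmNeg (eGen i) = eGen' i) ∧
    (∀ (L : Type*) [DistribLattice L] [BoundedOrder L] (ν : L → L),
      Antitone ν → ν ∘ ν = id →
      ∀ g : Fin n → L, ∃! h : BoundedLatticeHom (DM n) L,
        (∀ f : DM n, h (dmNeg f) = ν (h f)) ∧ (∀ i : Fin n, h (eGen i) = g i)) := by
  refine ⟨fun f => (dmNeg f).monotone, dmNeg_dmNeg, fun _ _ => (dmNeg_antitone ·), dmNeg_eGen, ?_⟩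
  intro L _ _ ν hν hνν g
  have hinv : Function.Involutive ν := congrFun hνν
  refine ⟨lift (Sum.elim g (ν ∘ g)),
    ⟨map_dmNeg_of_map_litDM_swap hν hinv _ ?_, fun i => lift_litDM _ (.inl i)⟩, ?_⟩
  · rintro (i | i) <;> simp [lift_litDM, hinv (g i)]
  · rintro φ ⟨hφ_dmNeg, hφ_eGen⟩
    refine boundedLatticeHom_ext fun ℓ => ?_
    rw [lift_litDM]
    rcases ℓ with i | i
    · exact hφ_eGen i
    · change φ (eGen' i) = ν (g i)
      rw [← dmNeg_eGen, hφ_dmNeg, hφ_eGen]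

end Stmt5
end

section
/- A square with opposite pairs of sides p and q makes the loops p and q commute up to homotopy: let X be a topological space, x : X, and let p, q : Path x x be loops at x. Suppose there is a continuous map F : I × I → X (I the unit interval) with F (0, t) = p t and F (1, t) = p t for all t, and F (s, 0) = q s and F (s, 1) = q s for all s. Then the concatenation p.trans q is homotopic to q.trans p relative to endpoints (Path.Homotopic (p.trans q) (q.trans p)). -/
open unitInterval

instance : ContractibleSpace (I × I) := by
  have : ContractibleSpace ↥((Set.Icc (0:ℝ) 1) ×ˢ (Set.Icc (0:ℝ) 1)) :=
    ((convex_Icc (0:ℝ) 1).prod (convex_Icc (0:ℝ) 1)).contractibleSpace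
      (Set.nonempty_Icc.2 zero_le_one |>.prod (Set.nonempty_Icc.2 zero_le_one))
  exact (Homeomorph.Set.prod _ _).symm.contractibleSpace

theorem homotopic_cast {X : Type*} [TopologicalSpace X] {a b a' b' : X}
    {p q : Path a b} (h : Path.Homotopic p q) (ha : a' = a) (hb : b' = b) :
    Path.Homotopic (p.cast ha hb) (q.cast ha hb) := by
  subst ha; subst hb
  obtain ⟨H⟩ := h
  exact ⟨H.cast (by ext t; rfl) (by ext t; rfl)⟩

/-- A square with the loop `p` on two opposite sides and the loop `q` on the
other two sides makes the concatenations `p.trans q` and `q.trans p` homotopic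
relative to endpoints. -/
theorem square_implies_loops_commute
    {X : Type*} [TopologicalSpace X] {x : X} (p q : Path x x)
    (F : C(I × I, X))
    (h0 : ∀ t : I, F (0, t) = p t) (h1 : ∀ t : I, F (1, t) = p t)
    (hb : ∀ s : I, F (s, 0) = q s) (ht : ∀ s : I, F (s, 1) = q s) :
    Path.Homotopic (p.trans q) (q.trans p) := by
  -- sides of the square, as paths in `I × I`
  let pL : Path ((0, 0) : I × I) ((0, 1) : I × I) :=
    ⟨⟨fun t => (0, t), by continuity⟩, rfl, rfl⟩
  let pT : Path ((0, 1) : I × I) ((1, 1) : I × I) :=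
    ⟨⟨fun t => (t, 1), by continuity⟩, rfl, rfl⟩
  let pB : Path ((0, 0) : I × I) ((1, 0) : I × I) :=
    ⟨⟨fun t => (t, 0), by continuity⟩, rfl, rfl⟩
  let pR : Path ((1, 0) : I × I) ((1, 1) : I × I) :=
    ⟨⟨fun t => (1, t), by continuity⟩, rfl, rfl⟩
  have hsq : Path.Homotopic (pL.trans pT) (pB.trans pR) :=
    SimplyConnectedSpace.paths_homotopic _ _
  have hmap := Path.Homotopic.map hsq F
  have hx0 : x = F ((0 : I), (0 : I)) := by rw [h0 0, p.source]
  have hx1 : x = F ((1 : I), (1 : I)) := by rw [h1 1, p.target]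
  have hc := homotopic_cast hmap hx0 hx1
  have e1 : p.trans q = ((pL.trans pT).map F.continuous).cast hx0 hx1 := by
    ext t
    simp only [Path.cast_coe, Path.map_coe, Function.comp_apply, Path.trans_apply]
    split_ifs with h
    · exact (h0 _).symm
    · exact (ht _).symm
  have e2 : q.trans p = ((pB.trans pR).map F.continuous).cast hx0 hx1 := by
    ext t
    simp only [Path.cast_coe, Path.map_coe, Function.comp_apply, Path.trans_apply]
    split_ifs with h
    · exact (hb _).symm
    · exact (h1 _).symm
  rw [e1, e2]
  exact hc
end

section
/- The Eckmann–Hilton cube exists: let X be a topological space, x : X, and let p, q : I × I → X be continuous maps that are constantly x on the boundary of the square, i.e., p (0,t) = p (1,t) = p (s,0) = p (s,1) = x and likewise for q, for all s, t ∈ I. Then there exists a continuous map H : I × I × I → X such that H (0, j, k) = H (1, j, k) = p (j, k), H (i, 0, k) = H (i, 1, k) = q (i, k), and H (i, j, 0) = H (i, j, 1) = x, for all i, j, k ∈ I. -/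
/-!
In the slice at height `i`, put `p`, squeezed affinely onto the box `[m, 1 - m]²` with
`m = min i (1 - i) / 2`, inside a frame of width `m`. On the frame, read `q` along paths that
start at `(i, k)` on the outer edge (so the faces `j = 0, 1` and `k = 0, 1` see `q (i, k)`) and
end outside the open square on the inner edge, where `q` is `x`, as is the squeezed `p`. At
`i = 0, 1` the frame is empty and the slice is `p`.
-/

open unitInterval

noncomputable section

namespace EckmannHilton

def depth (t : ℝ) : ℝ := min t (1 - t)

def squareDepth (a b : ℝ) : ℝ := min (depth a) (depth b)

lemma depth_nonneg (t : I) : 0 ≤ depth t := le_min t.2.1 (sub_nonneg.2 t.2.2)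

lemma depth_le_half (t : ℝ) : depth t ≤ 1 / 2 := by
  unfold depth; rcases le_total t (1 / 2) with h | h
  · exact (min_le_left _ _).trans h
  · exact (min_le_right _ _).trans (by linarith)

lemma squareDepth_nonneg (a b : I) : 0 ≤ squareDepth a b :=
  le_min (depth_nonneg a) (depth_nonneg b)

lemma squareDepth_nonpos_iff {a b : ℝ} :
    squareDepth a b ≤ 0 ↔ a ≤ 0 ∨ 1 ≤ a ∨ b ≤ 0 ∨ 1 ≤ b := by
  simp only [squareDepth, depth, min_le_iff, sub_nonpos, or_assoc]

@[simp] lemma depth_zero : depth 0 = 0 := by simp [depth]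

@[simp] lemma depth_one : depth 1 = 0 := by simp [depth]

lemma squareDepth_eq_zero_of_left {a : ℝ} (ha : depth a = 0) (b : I) : squareDepth a b = 0 := by
  simpa [squareDepth, ha] using depth_nonneg b

lemma squareDepth_eq_zero_of_right (a : I) {b : ℝ} (hb : depth b = 0) : squareDepth a b = 0 := by
  simpa [squareDepth, hb] using depth_nonneg a

def squeeze (m t : ℝ) : ℝ := (t - m) / (1 - 2 * m)

@[simp] lemma squeeze_zero (t : ℝ) : squeeze 0 t = t := by simp [squeeze]

@[simp] lemma squeeze_self (m : ℝ) : squeeze m m = 0 := by simp [squeeze]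

lemma squeeze_monotone {m : ℝ} (hm : 2 * m < 1) : Monotone (squeeze m) := fun _ _ h =>
  div_le_div_of_nonneg_right (by linarith) (by linarith)

lemma depth_squeeze {m : ℝ} (hm : 2 * m < 1) (t : ℝ) :
    depth (squeeze m t) = squeeze m (depth t) := by
  have hpos : 0 < 1 - 2 * m := by linarith
  have hsymm : squeeze m (1 - t) = 1 - squeeze m t := by
    rw [squeeze, squeeze, eq_sub_iff_add_eq, ← add_div, div_eq_one_iff_eq hpos.ne']
    ring
  rw [depth, depth, (squeeze_monotone hm).map_min, hsymm]

lemma squareDepth_squeeze {m : ℝ} (hm : 2 * m < 1) (a b : ℝ) :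
    squareDepth (squeeze m a) (squeeze m b) = squeeze m (squareDepth a b) := by
  rw [squareDepth, squareDepth, depth_squeeze hm, depth_squeeze hm,
    (squeeze_monotone hm).map_min]

-- At `t = depth i` the point has left the open square: across `i = 0` when `i ≤ 1/4`, across
-- `i = 1` when `3/4 ≤ i`, and across `k = 0` in between, where `4 * depth i ≥ 1`.
def frameMap (i k t : ℝ) : ℝ × ℝ := (i + 4 * (2 * i - 1) * t, k - 4 * t)

@[simp] lemma frameMap_zero (i k : ℝ) : frameMap i k 0 = (i, k) := by simp [frameMap]

lemma squareDepth_frameMap_depth_nonpos (i k : I) :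
    squareDepth (frameMap i k (depth i)).1 (frameMap i k (depth i)).2 ≤ 0 := by
  have hi0 := i.2.1; have hi1 := i.2.2; have hk := k.2.2
  rw [squareDepth_nonpos_iff]
  simp only [frameMap, depth]
  rcases le_total (i : ℝ) (1 / 4) with h | h
  · left; rw [min_eq_left (by linarith)]; nlinarith
  rcases le_total (i : ℝ) (3 / 4) with h' | h'
  · right; right; left
    have : 1 / 4 ≤ min (i : ℝ) (1 - i) := le_min h (by linarith)
    linarith
  · right; left; rw [min_eq_right (by linarith)]; nlinarith

variable {X : Type*} [TopologicalSpace X]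

structure IsTwoLoop (x : X) (f : C(I × I, X)) : Prop where
  left : ∀ t, f (0, t) = x
  right : ∀ t, f (1, t) = x
  bottom : ∀ s, f (s, 0) = x
  top : ∀ s, f (s, 1) = x

def squareExtend (f : C(I × I, X)) : C(ℝ × ℝ, X) :=
  f.comp ⟨fun z => (Set.projIcc 0 1 zero_le_one z.1, Set.projIcc 0 1 zero_le_one z.2), by
    fun_prop⟩

@[simp] lemma squareExtend_coe (f : C(I × I, X)) (s t : I) :
    squareExtend f (s, t) = f (s, t) := by
  simp [squareExtend, Set.projIcc_val]

lemma IsTwoLoop.squareExtend_eq {x : X} {f : C(I × I, X)} (hf : IsTwoLoop x f) {a b : ℝ}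
    (h : squareDepth a b ≤ 0) : squareExtend f (a, b) = x := by
  simp only [squareExtend, ContinuousMap.comp_apply, ContinuousMap.coe_mk]
  rcases squareDepth_nonpos_iff.1 h with h | h | h | h
  · rw [Set.projIcc_of_le_left _ h]; exact hf.left _
  · rw [Set.projIcc_of_right_le _ h]; exact hf.right _
  · rw [Set.projIcc_of_le_left _ h]; exact hf.bottom _
  · rw [Set.projIcc_of_right_le _ h]; exact hf.top _

def cube (p q : C(I × I, X)) (i j k : I) : X :=
  if 2 * squareDepth j k ≤ depth i then squareExtend q (frameMap i k (2 * squareDepth j k))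
  else squareExtend p (squeeze (depth i / 2) j, squeeze (depth i / 2) k)

variable {x : X} {p q : C(I × I, X)}

lemma cube_branches_agree (hp : IsTwoLoop x p) (hq : IsTwoLoop x q) {i j k : I}
    (h : 2 * squareDepth j k = depth i) :
    squareExtend q (frameMap i k (2 * squareDepth j k)) =
      squareExtend p (squeeze (depth i / 2) j, squeeze (depth i / 2) k) := by
  have hm : 2 * (depth i / 2) < 1 := by linarith [depth_le_half i]
  rw [hq.squareExtend_eq (h ▸ squareDepth_frameMap_depth_nonpos i k), hp.squareExtend_eq]
  rw [squareDepth_squeeze hm, ← h, mul_div_cancel_left₀ _ two_ne_zero, squeeze_self]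

lemma continuous_cube (hp : IsTwoLoop x p) (hq : IsTwoLoop x q) :
    Continuous fun z : I × I × I => cube p q z.1 z.2.1 z.2.2 := by
  refine Continuous.if_le ?_ ?_ ?_ ?_ fun z h => cube_branches_agree hp hq h
  · simp only [squareDepth, depth, frameMap]
    fun_prop
  · have hpos : ∀ z : I × I × I, 1 - 2 * (depth z.1 / 2) ≠ 0 := fun z => by
      linarith [depth_le_half z.1]
    simp only [squeeze, depth] at hpos ⊢
    fun_prop (disch := exact hpos)
  · simp only [squareDepth, depth]; fun_prop
  · simp only [depth]; fun_prop

lemma cube_of_depth_eq_zero (hp : IsTwoLoop x p) (hq : IsTwoLoop x q) {i : I}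
    (hi : depth i = 0) (j k : I) : cube p q i j k = p (j, k) := by
  rw [cube, hi, zero_div, squeeze_zero, squeeze_zero, squareExtend_coe]
  split_ifs with h
  · have hjk : squareDepth j k = 0 := by linarith [squareDepth_nonneg j k]
    rw [hjk, mul_zero, frameMap_zero, hq.squareExtend_eq (by simp [squareDepth, hi]),
      ← squareExtend_coe, hp.squareExtend_eq hjk.le]
  · rfl

lemma cube_of_squareDepth_eq_zero {j k : I} (hjk : squareDepth j k = 0) (i : I) :
    cube p q i j k = q (i, k) := by
  rw [cube, if_pos (by simpa [hjk] using depth_nonneg i), hjk, mul_zero, frameMap_zero,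
    squareExtend_coe]

end EckmannHilton

open EckmannHilton in
/-- The Eckmann–Hilton cube: for any two 2-loops `p` and `q` at `x` (continuous
maps on the square, constantly `x` on the boundary), there is a cube having `p`
on two opposite faces, `q` on two other opposite faces, and the constant square
at `x` on the remaining two faces. -/
theorem eckmannHilton_cube_exists
    {X : Type*} [TopologicalSpace X] (x : X) (p q : C(I × I, X))
    (hp0 : ∀ t : I, p (0, t) = x) (hp1 : ∀ t : I, p (1, t) = x)
    (hp0' : ∀ s : I, p (s, 0) = x) (hp1' : ∀ s : I, p (s, 1) = x)
    (hq0 : ∀ t : I, q (0, t) = x) (hq1 : ∀ t : I, q (1, t) = x)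
    (hq0' : ∀ s : I, q (s, 0) = x) (hq1' : ∀ s : I, q (s, 1) = x) :
    ∃ H : C(I × I × I, X),
      (∀ j k : I, H (0, j, k) = p (j, k)) ∧
      (∀ j k : I, H (1, j, k) = p (j, k)) ∧
      (∀ i k : I, H (i, 0, k) = q (i, k)) ∧
      (∀ i k : I, H (i, 1, k) = q (i, k)) ∧
      (∀ i j : I, H (i, j, 0) = x) ∧
      (∀ i j : I, H (i, j, 1) = x) := by
  have hp : IsTwoLoop x p := ⟨hp0, hp1, hp0', hp1'⟩
  have hq : IsTwoLoop x q := ⟨hq0, hq1, hq0', hq1'⟩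
  refine ⟨⟨_, continuous_cube hp hq⟩, cube_of_depth_eq_zero hp hq depth_zero,
    cube_of_depth_eq_zero hp hq depth_one, ?_, ?_, ?_, ?_⟩
  · exact fun i k => cube_of_squareDepth_eq_zero (squareDepth_eq_zero_of_left depth_zero k) i
  · exact fun i k => cube_of_squareDepth_eq_zero (squareDepth_eq_zero_of_left depth_one k) i
  · exact fun i j => (cube_of_squareDepth_eq_zero
      (squareDepth_eq_zero_of_right j depth_zero) i).trans (hq.bottom i)
  · exact fun i j => (cube_of_squareDepth_eq_zero
      (squareDepth_eq_zero_of_right j depth_one) i).trans (hq.top i)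
end
end
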